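/- Block dynamics censoring inequality: for any subset A ⊆ V and any block B, the heat-bath update matrices satisfy R_B ≤ R_{A∩B}, i.e., ⟨f₁, R_B f₂⟩_μ ≤ ⟨f₁, R_{A∩B} f₂⟩_μ for all increasing positive functions f₁, f₂ on {+,−}^V, where R_D denotes resampling the configuration on D from the conditional Ising distribution given the configuration off D. -/
import Mathlib


open Finset

variable {V : Type*} [Fintype V] [DecidableEq V]

/-- The Ising weight `w(σ) = exp(β Σ_{{u,v}∈E} σ(u)σ(v))` (spins `±1` via `Bool`). -/
noncomputable def isingWeight (G : SimpleGraph V) [DecidableRel G.Adj] (β : ℝ)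
    (σ : V → Bool) : ℝ :=
  Real.exp (β * ∑ e ∈ G.edgeFinset,
    Sym2.lift ⟨fun u v => (if σ u then (1 : ℝ) else -1) * (if σ v then (1 : ℝ) else -1),
      fun _ _ => mul_comm _ _⟩ e)

/-- The heat-bath update matrix `R_D`: resample `D` from the conditional Ising measure
given the configuration off `D`. -/
noncomputable def heatBath (G : SimpleGraph V) [DecidableRel G.Adj] (β : ℝ)
    (D : Finset V) : Matrix (V → Bool) (V → Bool) ℝ :=
  fun σ τ =>
    if ∀ v ∉ D, σ v = τ v then
      isingWeight G β τ /
        ∑ τ' ∈ univ.filter (fun τ' : V → Bool => ∀ v ∉ D, σ v = τ' v), isingWeight G β τ'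
    else 0

/-! ### Auxiliary definitions -/

/-- The set of configurations agreeing with `σ` off `D`. -/
noncomputable def agrSet (D : Finset V) (σ : V → Bool) : Finset (V → Bool) :=
  univ.filter (fun τ : V → Bool => ∀ v ∉ D, σ v = τ v)

lemma mem_agrSet {D : Finset V} {σ τ : V → Bool} :
    τ ∈ agrSet D σ ↔ ∀ v ∉ D, σ v = τ v := by
  simp [agrSet]

lemma self_mem_agrSet {D : Finset V} {σ : V → Bool} : σ ∈ agrSet D σ :=
  mem_agrSet.2 fun _ _ => rfl

lemma agrSet_eq_of_agr {D : Finset V} {σ τ : V → Bool} (h : ∀ v ∉ D, σ v = τ v) :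
    agrSet D σ = agrSet D τ := by
  ext τ'
  simp only [mem_agrSet]
  constructor
  · intro h' v hv; rw [← h v hv]; exact h' v hv
  · intro h' v hv; rw [h v hv]; exact h' v hv

/-- The heat-bath conditional-expectation operator, in functional form. -/
noncomputable def Rop (w : (V → Bool) → ℝ) (D : Finset V) (f : (V → Bool) → ℝ)
    (σ : V → Bool) : ℝ :=
  (∑ τ ∈ agrSet D σ, w τ * f τ) / (∑ τ ∈ agrSet D σ, w τ)

lemma Z_pos {w : (V → Bool) → ℝ} (hw : ∀ τ, 0 < w τ) (D : Finset V) (σ : V → Bool) :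
    0 < ∑ τ ∈ agrSet D σ, w τ :=
  sum_pos (fun τ _ => hw τ) ⟨σ, self_mem_agrSet⟩

lemma Rop_nonneg {w : (V → Bool) → ℝ} (hw : ∀ τ, 0 < w τ) (D : Finset V)
    {f : (V → Bool) → ℝ} (hf : ∀ τ, 0 ≤ f τ) (σ : V → Bool) :
    0 ≤ Rop w D f σ :=
  div_nonneg (sum_nonneg fun τ _ => mul_nonneg (hw τ).le (hf τ)) (Z_pos hw D σ).le

lemma Rop_congr {w : (V → Bool) → ℝ} (D : Finset V) (f : (V → Bool) → ℝ)
    {σ τ : V → Bool} (h : ∀ v ∉ D, σ v = τ v) :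
    Rop w D f σ = Rop w D f τ := by
  unfold Rop
  rw [agrSet_eq_of_agr h]

lemma heatBath_mulVec (G : SimpleGraph V) [DecidableRel G.Adj] (β : ℝ)
    (D : Finset V) (f : (V → Bool) → ℝ) (σ : V → Bool) :
    (heatBath G β D).mulVec f σ = Rop (isingWeight G β) D f σ := by
  unfold Matrix.mulVec heatBath dotProduct Rop agrSet
  simp only [ite_mul, zero_mul]
  rw [← Finset.sum_filter, Finset.sum_div]
  exact Finset.sum_congr rfl fun τ _ => (div_mul_eq_mul_div _ _ _)

/-- The key grouping lemma: on any finset `T` closed under agreement-off-`D`, integrating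
`w ⬝ (R_D h) ⬝ p` equals integrating `w ⬝ h ⬝ p`, provided `p` only depends on the
configuration off `D`. -/
lemma sumG (w : (V → Bool) → ℝ) (hw : ∀ τ, 0 < w τ) (D : Finset V)
    (T : Finset (V → Bool))
    (hT : ∀ ⦃σ τ : V → Bool⦄, σ ∈ T → (∀ v ∉ D, σ v = τ v) → τ ∈ T)
    (h p : (V → Bool) → ℝ)
    (hp : ∀ σ τ : V → Bool, (∀ v ∉ D, σ v = τ v) → p σ = p τ) :
    ∑ σ ∈ T, w σ * Rop w D h σ * p σ = ∑ σ ∈ T, w σ * h σ * p σ := by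
  classical
  set k : (V → Bool) → (V → Bool) := fun σ v => if v ∈ D then false else σ v with hk
  have hkey : ∀ σ τ : V → Bool, k σ = k τ ↔ ∀ v ∉ D, σ v = τ v := by
    intro σ τ
    constructor
    · intro hkk v hv
      have := congrFun hkk v
      simpa [k, hv] using this
    · intro hagr
      funext v
      by_cases hv : v ∈ D
      · simp [k, hv]
      · simp [k, hv, hagr v hv]
  rw [← Finset.sum_fiberwise T k (fun σ => w σ * Rop w D h σ * p σ),
      ← Finset.sum_fiberwise T k (fun σ => w σ * h σ * p σ)]
  refine Finset.sum_congr rfl fun κ _ => ?_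
  rcases (T.filter fun σ => k σ = κ).eq_empty_or_nonempty with hE | ⟨τ₀, hτ₀⟩
  · simp [hE]
  · have hagr : ∀ σ ∈ T.filter (fun σ => k σ = κ), ∀ τ ∈ T.filter (fun σ => k σ = κ),
        ∀ v ∉ D, σ v = τ v := by
      intro σ hσ τ hτ
      exact (hkey σ τ).1 (by rw [(mem_filter.1 hσ).2, (mem_filter.1 hτ).2])
    have hSS : ∀ τ ∈ T.filter (fun σ => k σ = κ), agrSet D τ = T.filter (fun σ => k σ = κ) := by
      intro τ hτ
      ext τ'
      simp only [mem_agrSet, mem_filter]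
      constructor
      · intro hA
        exact ⟨hT (mem_filter.1 hτ).1 hA, by rw [← (hkey τ τ').2 hA, (mem_filter.1 hτ).2]⟩
      · intro hB
        exact (hkey τ τ').1 (by rw [(mem_filter.1 hτ).2, hB.2])
    have hZ : 0 < ∑ τ' ∈ T.filter (fun σ => k σ = κ), w τ' :=
      sum_pos (fun τ _ => hw τ) ⟨τ₀, hτ₀⟩
    calc ∑ σ ∈ T.filter (fun σ => k σ = κ), w σ * Rop w D h σ * p σ
        = ∑ σ ∈ T.filter (fun σ => k σ = κ),
            w σ * (((∑ τ' ∈ T.filter (fun σ => k σ = κ), w τ' * h τ') /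
              (∑ τ' ∈ T.filter (fun σ => k σ = κ), w τ')) * p τ₀) := by
          refine Finset.sum_congr rfl fun σ hσ => ?_
          rw [mul_assoc]
          congr 1
          rw [Rop, hSS σ hσ, hp σ τ₀ (hagr σ hσ τ₀ hτ₀)]
      _ = (∑ σ ∈ T.filter (fun σ => k σ = κ), w σ) *
            (((∑ τ' ∈ T.filter (fun σ => k σ = κ), w τ' * h τ') /
              (∑ τ' ∈ T.filter (fun σ => k σ = κ), w τ')) * p τ₀) := by
          rw [Finset.sum_mul]
      _ = (∑ τ' ∈ T.filter (fun σ => k σ = κ), w τ' * h τ') * p τ₀ := by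
          rw [mul_comm, mul_right_comm, div_mul_cancel₀ _ hZ.ne']
      _ = ∑ σ ∈ T.filter (fun σ => k σ = κ), w σ * h σ * p σ := by
          rw [Finset.sum_mul]
          exact Finset.sum_congr rfl fun σ hσ => by
            rw [hp σ τ₀ (hagr σ hσ τ₀ hτ₀)]

/-- Tower property: `R_B R_C = R_B` for `C ⊆ B`. -/
lemma Rop_tower {w : (V → Bool) → ℝ} (hw : ∀ τ, 0 < w τ) {C B : Finset V} (hCB : C ⊆ B)
    (f : (V → Bool) → ℝ) (σ : V → Bool) :
    Rop w B (Rop w C f) σ = Rop w B f σ := by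
  have hT : ∀ ⦃σ' τ' : V → Bool⦄, σ' ∈ agrSet B σ → (∀ v ∉ C, σ' v = τ' v) → τ' ∈ agrSet B σ := by
    intro σ' τ' h1 h2
    rw [mem_agrSet] at h1 ⊢
    intro v hv
    rw [h1 v hv, h2 v (fun hC => hv (hCB hC))]
  have key := sumG w hw C (agrSet B σ) hT f (fun _ => 1) (fun _ _ _ => rfl)
  simp only [mul_one] at key
  have e : Rop w B (Rop w C f) σ
      = (∑ τ ∈ agrSet B σ, w τ * Rop w C f τ) / (∑ τ ∈ agrSet B σ, w τ) := rfl
  rw [e, key]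
  rfl

/-- Nonnegativity of a restricted weight. -/
lemma ite_w_nonneg {w : (V → Bool) → ℝ} (hw : ∀ τ, 0 < w τ) (s : Finset (V → Bool))
    (a : V → Bool) : (0:ℝ) ≤ if a ∈ s then w a else 0 := by
  split
  · exact (hw a).le
  · exact le_rfl

lemma sum_ite_w {w h : (V → Bool) → ℝ} (s : Finset (V → Bool)) :
    (∑ a : V → Bool, (if a ∈ s then w a else 0) * h a) = ∑ τ ∈ s, w τ * h τ := by
  rw [← Finset.sum_filter_add_sum_filter_not univ (fun a => a ∈ s)]
  have h2 : ∑ a ∈ univ.filter (fun a => ¬ a ∈ s), (if a ∈ s then w a else 0) * h a = 0 := by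
    refine Finset.sum_eq_zero fun a ha => ?_
    rw [if_neg (mem_filter.1 ha).2, zero_mul]
  rw [h2, add_zero, Finset.filter_mem_eq_inter, univ_inter]
  exact Finset.sum_congr rfl fun a ha => by rw [if_pos ha]

/-- Stochastic monotonicity of the conditional Ising measures (via Holley). -/
lemma Rop_monotone {w : (V → Bool) → ℝ} (hw : ∀ τ, 0 < w τ)
    (hsup : ∀ a b : V → Bool, w a * w b ≤ w (a ⊓ b) * w (a ⊔ b))
    (C : Finset V) {f : (V → Bool) → ℝ} (hf : Monotone f) (hf0 : ∀ τ, 0 ≤ f τ) :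
    Monotone (Rop w C f) := by
  intro σ σ' hσ
  have hZ₁ : 0 < ∑ τ ∈ agrSet C σ, w τ := Z_pos hw C σ
  have hZ₂ : 0 < ∑ τ ∈ agrSet C σ', w τ := Z_pos hw C σ'
  set F : (V → Bool) → ℝ :=
    fun a => (if a ∈ agrSet C σ then w a else 0) / (∑ τ ∈ agrSet C σ, w τ) with hF
  set G : (V → Bool) → ℝ :=
    fun a => (if a ∈ agrSet C σ' then w a else 0) / (∑ τ ∈ agrSet C σ', w τ) with hG
  have hFnn : (0 : (V → Bool) → ℝ) ≤ F :=
    fun a => div_nonneg (ite_w_nonneg hw _ a) hZ₁.le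
  have hGnn : (0 : (V → Bool) → ℝ) ≤ G :=
    fun a => div_nonneg (ite_w_nonneg hw _ a) hZ₂.le
  have hf0' : (0 : (V → Bool) → ℝ) ≤ f := fun a => hf0 a
  have hsum : ∑ a : V → Bool, F a = ∑ a : V → Bool, G a := by
    rw [hF, hG]
    simp only
    rw [← Finset.sum_div, ← Finset.sum_div, Finset.sum_ite_mem, Finset.sum_ite_mem,
      univ_inter, univ_inter, div_self hZ₁.ne', div_self hZ₂.ne']
  have hsm : ∀ a b : V → Bool, F a * G b ≤ F (a ⊓ b) * G (a ⊔ b) := by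
    intro a b
    rw [hF, hG]
    simp only
    rw [div_mul_div_comm, div_mul_div_comm]
    refine div_le_div_of_nonneg_right ?_ (mul_nonneg hZ₁.le hZ₂.le)
    by_cases ha : a ∈ agrSet C σ
    · by_cases hb : b ∈ agrSet C σ'
      · have hab₁ : a ⊓ b ∈ agrSet C σ := by
          rw [mem_agrSet] at ha hb ⊢
          intro v hv
          show σ v = a v ⊓ b v
          rw [← ha v hv, ← hb v hv]
          exact (inf_eq_left.2 (hσ v)).symm
        have hab₂ : a ⊔ b ∈ agrSet C σ' := by
          rw [mem_agrSet] at ha hb ⊢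
          intro v hv
          show σ' v = a v ⊔ b v
          rw [← ha v hv, ← hb v hv]
          exact (sup_eq_right.2 (hσ v)).symm
        rw [if_pos ha, if_pos hb, if_pos hab₁, if_pos hab₂]
        exact hsup a b
      · rw [if_neg hb, mul_zero]
        exact mul_nonneg (ite_w_nonneg hw _ _) (ite_w_nonneg hw _ _)
    · rw [if_neg ha, zero_mul]
      exact mul_nonneg (ite_w_nonneg hw _ _) (ite_w_nonneg hw _ _)
  have key := holley (μ := f) (f := F) (g := G) hf0' hFnn hGnn hf hsum hsm
  have e1 : ∀ (s : Finset (V → Bool)) (Z : ℝ),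
      (∑ a : V → Bool, f a * ((if a ∈ s then w a else 0) / Z))
        = (∑ τ ∈ s, w τ * f τ) / Z := by
    intro s Z
    rw [← sum_ite_w (w := w) (h := f) s, Finset.sum_div]
    exact Finset.sum_congr rfl fun a _ => by ring
  rw [hF, hG] at key
  simp only at key
  rw [e1, e1] at key
  exact key

/-- The FKG inequality for the conditional Ising measure on a block. -/
lemma Rop_fkg {w : (V → Bool) → ℝ} (hw : ∀ τ, 0 < w τ)
    (hsup : ∀ a b : V → Bool, w a * w b ≤ w (a ⊓ b) * w (a ⊔ b))
    (B : Finset V) {g₁ g₂ : (V → Bool) → ℝ} (hg₁ : Monotone g₁) (hg₂ : Monotone g₂)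
    (hg₁0 : ∀ τ, 0 ≤ g₁ τ) (hg₂0 : ∀ τ, 0 ≤ g₂ τ) (σ : V → Bool) :
    Rop w B g₁ σ * Rop w B g₂ σ ≤ Rop w B (fun τ => g₁ τ * g₂ τ) σ := by
  have hZ : 0 < ∑ τ ∈ agrSet B σ, w τ := Z_pos hw B σ
  set M : (V → Bool) → ℝ := fun a => if a ∈ agrSet B σ then w a else 0 with hM
  have hMnn : (0 : (V → Bool) → ℝ) ≤ M := fun a => ite_w_nonneg hw _ a
  have hg₁0' : (0 : (V → Bool) → ℝ) ≤ g₁ := fun a => hg₁0 a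
  have hg₂0' : (0 : (V → Bool) → ℝ) ≤ g₂ := fun a => hg₂0 a
  have hMsm : ∀ a b : V → Bool, M a * M b ≤ M (a ⊓ b) * M (a ⊔ b) := by
    intro a b
    rw [hM]
    simp only
    by_cases ha : a ∈ agrSet B σ
    · by_cases hb : b ∈ agrSet B σ
      · have hab₁ : a ⊓ b ∈ agrSet B σ := by
          rw [mem_agrSet] at ha hb ⊢
          intro v hv
          show σ v = a v ⊓ b v
          rw [← ha v hv, ← hb v hv, inf_idem]
        have hab₂ : a ⊔ b ∈ agrSet B σ := by
          rw [mem_agrSet] at ha hb ⊢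
          intro v hv
          show σ v = a v ⊔ b v
          rw [← ha v hv, ← hb v hv, sup_idem]
        rw [if_pos ha, if_pos hb, if_pos hab₁, if_pos hab₂]
        exact hsup a b
      · rw [if_neg hb, mul_zero]
        exact mul_nonneg (ite_w_nonneg hw _ _) (ite_w_nonneg hw _ _)
    · rw [if_neg ha, zero_mul]
      exact mul_nonneg (ite_w_nonneg hw _ _) (ite_w_nonneg hw _ _)
  have key := fkg (μ := M) (f := g₁) (g := g₂) hMnn hg₁0' hg₂0' hg₁ hg₂ hMsm
  rw [hM] at key
  simp only [Pi.mul_apply] at key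
  rw [sum_ite_w (w := w) (h := g₁), sum_ite_w (w := w) (h := g₂),
    sum_ite_w (w := w) (h := fun a => g₁ a * g₂ a)] at key
  have e2 : (∑ a : V → Bool, if a ∈ agrSet B σ then w a else 0) = ∑ τ ∈ agrSet B σ, w τ := by
    rw [Finset.sum_ite_mem, univ_inter]
  rw [e2] at key
  show (∑ τ ∈ agrSet B σ, w τ * g₁ τ) / _ * ((∑ τ ∈ agrSet B σ, w τ * g₂ τ) / _)
      ≤ (∑ τ ∈ agrSet B σ, w τ * (g₁ τ * g₂ τ)) / _
  rw [div_mul_div_comm, div_le_div_iff₀ (mul_pos hZ hZ) hZ]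
  calc (∑ τ ∈ agrSet B σ, w τ * g₁ τ) * (∑ τ ∈ agrSet B σ, w τ * g₂ τ) * (∑ τ ∈ agrSet B σ, w τ)
      ≤ ((∑ τ ∈ agrSet B σ, w τ) * ∑ τ ∈ agrSet B σ, w τ * (g₁ τ * g₂ τ)) *
          (∑ τ ∈ agrSet B σ, w τ) :=
        mul_le_mul_of_nonneg_right key hZ.le
    _ = (∑ τ ∈ agrSet B σ, w τ * (g₁ τ * g₂ τ)) * ((∑ τ ∈ agrSet B σ, w τ) *
          (∑ τ ∈ agrSet B σ, w τ)) := by ring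

/-- The Ising weight is log-supermodular. -/
lemma isingWeight_supermod (G : SimpleGraph V) [DecidableRel G.Adj] {β : ℝ} (hβ : 0 < β)
    (a b : V → Bool) :
    isingWeight G β a * isingWeight G β b ≤
      isingWeight G β (a ⊓ b) * isingWeight G β (a ⊔ b) := by
  unfold isingWeight
  rw [← Real.exp_add, ← Real.exp_add]
  rw [Real.exp_le_exp]
  rw [← mul_add, ← mul_add]
  refine mul_le_mul_of_nonneg_left ?_ hβ.le
  rw [← Finset.sum_add_distrib, ← Finset.sum_add_distrib]
  refine Finset.sum_le_sum fun e _ => ?_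
  induction e using Sym2.ind with
  | _ u v =>
    simp only [Sym2.lift_mk]
    have hinf : ∀ x : V, (a ⊓ b) x = (a x && b x) := fun x => rfl
    have hsup' : ∀ x : V, (a ⊔ b) x = (a x || b x) := fun x => rfl
    rw [hinf u, hinf v, hsup' u, hsup' v]
    cases a u <;> cases a v <;> cases b u <;> cases b v <;> norm_num

/-- block-dynamics censoring inequality: for any `A ⊆ V` and block `B`,
`R_B ≤ R_{A∩B}`, i.e. `⟨f₁, R_B f₂⟩_μ ≤ ⟨f₁, R_{A∩B} f₂⟩_μ` for all increasing
positive `f₁, f₂` (stated with the unnormalized Ising weights `w ∝ μ`). -/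
theorem stmt_15 (G : SimpleGraph V) [DecidableRel G.Adj] (β : ℝ) (hβ : 0 < β)
    (A B : Finset V)
    (f₁ f₂ : (V → Bool) → ℝ) (hf₁ : Monotone f₁) (hf₂ : Monotone f₂)
    (hf₁pos : ∀ σ, 0 < f₁ σ) (hf₂pos : ∀ σ, 0 < f₂ σ) :
    ∑ σ : V → Bool, isingWeight G β σ * f₁ σ * (heatBath G β B).mulVec f₂ σ ≤
      ∑ σ : V → Bool, isingWeight G β σ * f₁ σ * (heatBath G β (A ∩ B)).mulVec f₂ σ := by
  classical
  set w := isingWeight G β with hw_def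
  have hw : ∀ τ, 0 < w τ := fun τ => Real.exp_pos _
  have hsup : ∀ a b : V → Bool, w a * w b ≤ w (a ⊓ b) * w (a ⊔ b) :=
    fun a b => isingWeight_supermod G hβ a b
  set C := A ∩ B with hC
  have hCB : C ⊆ B := inter_subset_right
  simp only [heatBath_mulVec, ← hw_def, ← hC]
  have hunivT : ∀ (D : Finset V), ∀ ⦃σ τ : V → Bool⦄,
      σ ∈ (univ : Finset (V → Bool)) → (∀ v ∉ D, σ v = τ v) → τ ∈ (univ : Finset (V → Bool)) :=
    fun _ _ _ _ _ => mem_univ _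
  have hf₁0 : ∀ τ, 0 ≤ f₁ τ := fun τ => (hf₁pos τ).le
  have hf₂0 : ∀ τ, 0 ≤ f₂ τ := fun τ => (hf₂pos τ).le
  have hg₁mono : Monotone (Rop w C f₁) := Rop_monotone hw hsup C hf₁ hf₁0
  have hg₂mono : Monotone (Rop w C f₂) := Rop_monotone hw hsup C hf₂ hf₂0
  have hg₁0 : ∀ τ, 0 ≤ Rop w C f₁ τ := Rop_nonneg hw C hf₁0
  have hg₂0 : ∀ τ, 0 ≤ Rop w C f₂ τ := Rop_nonneg hw C hf₂0
  have step1 : ∑ σ : V → Bool, w σ * f₁ σ * Rop w B f₂ σ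
      = ∑ σ : V → Bool, w σ * Rop w B f₁ σ * Rop w B f₂ σ :=
    (sumG w hw B univ (hunivT B) f₁ (Rop w B f₂)
      (fun σ τ h => Rop_congr B f₂ h)).symm
  have step2 : ∑ σ : V → Bool, w σ * Rop w B f₁ σ * Rop w B f₂ σ
      = ∑ σ : V → Bool, w σ * Rop w B (Rop w C f₁) σ * Rop w B (Rop w C f₂) σ := by
    refine Finset.sum_congr rfl fun σ _ => ?_
    rw [Rop_tower hw hCB f₁ σ, Rop_tower hw hCB f₂ σ]
  have step3 : ∑ σ : V → Bool, w σ * Rop w B (Rop w C f₁) σ * Rop w B (Rop w C f₂) σ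
      ≤ ∑ σ : V → Bool, w σ * Rop w B (fun τ => Rop w C f₁ τ * Rop w C f₂ τ) σ := by
    refine Finset.sum_le_sum fun σ _ => ?_
    rw [mul_assoc]
    exact mul_le_mul_of_nonneg_left
      (Rop_fkg hw hsup B hg₁mono hg₂mono hg₁0 hg₂0 σ) (hw σ).le
  have step4 : ∑ σ : V → Bool, w σ * Rop w B (fun τ => Rop w C f₁ τ * Rop w C f₂ τ) σ
      = ∑ σ : V → Bool, w σ * (Rop w C f₁ σ * Rop w C f₂ σ) := by
    have key := sumG w hw B univ (hunivT B)
      (fun τ => Rop w C f₁ τ * Rop w C f₂ τ) (fun _ => 1) (fun _ _ _ => rfl)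
    simp only [mul_one] at key
    exact key
  have step5 : ∑ σ : V → Bool, w σ * (Rop w C f₁ σ * Rop w C f₂ σ)
      = ∑ σ : V → Bool, w σ * f₁ σ * Rop w C f₂ σ := by
    have key := sumG w hw C univ (hunivT C) f₁ (Rop w C f₂)
      (fun σ τ h => Rop_congr C f₂ h)
    rw [← key]
    exact Finset.sum_congr rfl fun σ _ => by ring
  calc ∑ σ : V → Bool, w σ * f₁ σ * Rop w B f₂ σ
      = ∑ σ : V → Bool, w σ * Rop w B (Rop w C f₁) σ * Rop w B (Rop w C f₂) σ := by
        rw [step1, step2]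
    _ ≤ ∑ σ : V → Bool, w σ * Rop w B (fun τ => Rop w C f₁ τ * Rop w C f₂ τ) σ := step3
    _ = ∑ σ : V → Bool, w σ * f₁ σ * Rop w C f₂ σ := by rw [step4, step5]
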